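/- arXiv:2603.19666 — 2 statements merged into one kernel-verified Lean document; each statement's English description precedes it below -/
import Mathlib

section
/- Let p and q be distinct odd primes with q > p and q > 2p - 1. Then the fault-tolerant metric dimension of the barycentric subdivision of the zero divisor graph of Z_{pq} equals q - 1, i.e. fdim(BS(Γ(Z_{pq}))) = q - 1. -/
open SimpleGraph

/-- Vertices of the zero divisor graph of `ZMod n`: nonzero zero divisors. -/
def ZDVertex (n : ℕ) : Type :=
  {x : ZMod n // x ≠ 0 ∧ ∃ y : ZMod n, y ≠ 0 ∧ x * y = 0}

/-- The zero divisor graph of `ZMod n`. -/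
def zdGraph (n : ℕ) : SimpleGraph (ZDVertex n) where
  Adj a b := a ≠ b ∧ a.1 * b.1 = 0
  symm := by
    constructor
    rintro a b ⟨hne, h⟩
    exact ⟨hne.symm, by rwa [mul_comm]⟩
  loopless := by
    constructor
    rintro a ⟨hne, -⟩
    exact hne rfl

/-- Vertex type of the barycentric subdivision: original vertices plus one
vertex for each edge. -/
def BSVertex {V : Type*} (G : SimpleGraph V) : Type _ := V ⊕ G.edgeSet

/-- The barycentric subdivision of a simple graph: each edge `uv` is replaced
by a path `u – w_{uv} – v` through the new vertex corresponding to the edge. -/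
def BS {V : Type*} (G : SimpleGraph V) : SimpleGraph (BSVertex G) where
  Adj x y :=
    (∃ (v : V) (e : G.edgeSet), x = Sum.inl v ∧ y = Sum.inr e ∧ v ∈ (e : Sym2 V)) ∨
    (∃ (v : V) (e : G.edgeSet), x = Sum.inr e ∧ y = Sum.inl v ∧ v ∈ (e : Sym2 V))
  symm := by
    constructor
    rintro x y (⟨v, e, rfl, rfl, h⟩ | ⟨v, e, rfl, rfl, h⟩)
    · exact Or.inr ⟨v, e, rfl, rfl, h⟩
    · exact Or.inl ⟨v, e, rfl, rfl, h⟩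
  loopless := by
    constructor
    rintro x (⟨v, e, rfl, h, -⟩ | ⟨v, e, rfl, h, -⟩) <;> simp at h

/-- `W` is a resolving set for `G`. -/
def IsResolving {V : Type*} (G : SimpleGraph V) (W : Set V) : Prop :=
  ∀ x y : V, x ≠ y → ∃ w ∈ W, G.dist x w ≠ G.dist y w

/-- The metric dimension of `G`: minimum cardinality of a resolving set. -/
noncomputable def metricDim {V : Type*} (G : SimpleGraph V) : ℕ :=
  sInf {k : ℕ | ∃ W : Set V, IsResolving G W ∧ W.ncard = k}

/-- `W` is a metric basis of `G`: a resolving set of minimum cardinality. -/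
def IsMetricBasis {V : Type*} (G : SimpleGraph V) (W : Set V) : Prop :=
  IsResolving G W ∧ W.ncard = metricDim G

/-- `W` is a fault-tolerant resolving set for `G`. -/
def IsFTResolving {V : Type*} (G : SimpleGraph V) (W : Set V) : Prop :=
  IsResolving G W ∧ ∀ w ∈ W, IsResolving G (W \ {w})

/-- The fault-tolerant metric dimension of `G`. -/
noncomputable def ftMetricDim {V : Type*} (G : SimpleGraph V) : ℕ :=
  sInf {k : ℕ | ∃ W : Set V, IsFTResolving G W ∧ W.ncard = k}

/-- The set `U` of original vertices of `Γ(Z_{pq})`, viewed inside the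
barycentric subdivision, that are nonzero multiples of `q` in `Z_{pq}`. -/
def USet (p q : ℕ) : Set (BSVertex (zdGraph (p * q))) :=
  {x | ∃ v : ZDVertex (p * q), x = Sum.inl v ∧
      ∃ k : ZMod (p * q), v.1 = (q : ZMod (p * q)) * k}

/-- The set `A` of original vertices of `Γ(Z_{pq})`, viewed inside the
barycentric subdivision, that are nonzero multiples of `p` in `Z_{pq}`. -/
def ASet (p q : ℕ) : Set (BSVertex (zdGraph (p * q))) :=
  {x | ∃ v : ZDVertex (p * q), x = Sum.inl v ∧
      ∃ k : ZMod (p * q), v.1 = (p : ZMod (p * q)) * k}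

/-!
By the Chinese remainder theorem `Γ(ℤ_{pq})` is the complete bipartite graph with parts
`A = pℤ_{pq} \ {0}` and `B = qℤ_{pq} \ {0}`, of sizes `q - 1` and `p - 1`. In its subdivision every
distance is at most 4 and is read off from incidences. Two vertices `a, a' ∈ A` are resolved only
by vertices in the stars of `a` and `a'` (the vertex with the subdivision vertices of its edges),
and these stars are disjoint. A fault-tolerant resolving set `W` meets the two stars of every such
pair in two points, so at most one star misses `W` and then every other star holds two points of
`W`; hence `|W| ≥ |A|`. Conversely, if `|A| > 2|B|`, fix `a₀ ∈ A` and map `A \ {a₀}` onto `B` so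
that every `b ∈ B` has two preimages; `a₀` together with the subdivision vertices of the edges
`a c(a)`, `a ≠ a₀`, is a fault-tolerant resolving set of size `|A|`. The hypothesis `q > 2p - 1`
says exactly `|A| > 2|B|`.
-/

section FaultTolerance

variable {V : Type*} {G : SimpleGraph V} {W : Set V} {x y : V}

def ResolvesTwice (G : SimpleGraph V) (W : Set V) (x y : V) : Prop :=
  ∃ w₁ ∈ W, ∃ w₂ ∈ W, w₁ ≠ w₂ ∧ G.dist x w₁ ≠ G.dist y w₁ ∧ G.dist x w₂ ≠ G.dist y w₂

lemma ResolvesTwice.symm (h : ResolvesTwice G W x y) : ResolvesTwice G W y x :=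
  let ⟨w₁, hw₁, w₂, hw₂, h12, hd₁, hd₂⟩ := h
  ⟨w₁, hw₁, w₂, hw₂, h12, hd₁.symm, hd₂.symm⟩

lemma isFTResolving_iff : IsFTResolving G W ↔ ∀ x y, x ≠ y → ResolvesTwice G W x y := by
  refine ⟨fun hW x y hxy ↦ ?_, fun h ↦ ⟨fun x y hxy ↦ ?_, fun w hw x y hxy ↦ ?_⟩⟩
  · obtain ⟨w₁, hw₁, hd₁⟩ := hW.1 x y hxy
    obtain ⟨w₂, ⟨hw₂, hne⟩, hd₂⟩ := hW.2 w₁ hw₁ x y hxy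
    exact ⟨w₁, hw₁, w₂, hw₂, Ne.symm hne, hd₁, hd₂⟩
  · obtain ⟨w₁, hw₁, -, -, -, hd₁, -⟩ := h x y hxy
    exact ⟨w₁, hw₁, hd₁⟩
  · obtain ⟨w₁, hw₁, w₂, hw₂, h12, hd₁, hd₂⟩ := h x y hxy
    by_cases h1 : w₁ = w
    · exact ⟨w₂, ⟨hw₂, fun h2 ↦ h12 (h1.trans h2.symm)⟩, hd₂⟩
    · exact ⟨w₁, ⟨hw₁, h1⟩, hd₁⟩

end FaultTolerance

theorem Finset.card_le_card_biUnion_of_two_le_add {ι β : Type*} [DecidableEq β] {s : Finset ι}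
    {t : ι → Finset β} (hs : 1 < s.card) (hdisj : (s : Set ι).PairwiseDisjoint t)
    (h : ∀ i ∈ s, ∀ j ∈ s, i ≠ j → 2 ≤ (t i).card + (t j).card) :
    s.card ≤ (s.biUnion t).card := by
  classical
  rw [Finset.card_biUnion hdisj]
  by_cases hpos : ∀ i ∈ s, 1 ≤ (t i).card
  · simpa using Finset.card_nsmul_le_sum s _ 1 hpos
  push Not at hpos
  obtain ⟨i, hi, hti⟩ := hpos
  have h2 : ∀ j ∈ s.erase i, 2 ≤ (t j).card := fun j hj ↦ by
    have := h i hi j (Finset.mem_of_mem_erase hj) (Finset.ne_of_mem_erase hj).symm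
    omega
  calc s.card ≤ (s.erase i).card • 2 := by rw [Finset.card_erase_of_mem hi, smul_eq_mul]; omega
    _ ≤ ∑ j ∈ s.erase i, (t j).card := Finset.card_nsmul_le_sum _ _ 2 h2
    _ ≤ ∑ j ∈ s, (t j).card := Finset.sum_le_sum_of_subset (Finset.erase_subset i s)

theorem exists_map_with_two_preimages {α β : Type*} (S : Set α) (T : Set β) [Finite S] [Finite T]
    (hT : T.Nonempty) (h : 2 * T.ncard ≤ S.ncard) :
    ∃ c : α → β, (∀ a, c a ∈ T) ∧
      ∀ b ∈ T, ∃ a₁ ∈ S, ∃ a₂ ∈ S, a₁ ≠ a₂ ∧ c a₁ = b ∧ c a₂ = b := by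
  classical
  have := Fintype.ofFinite S
  have := Fintype.ofFinite T
  obtain ⟨g⟩ : Nonempty (T × Fin 2 ↪ S) := Function.Embedding.nonempty_of_card_le <| by
    simp only [← Nat.card_eq_fintype_card, Nat.card_prod, Nat.card_fin, Nat.card_coe_set_eq]
    omega
  have hg : Function.Injective fun x ↦ (g x : α) := Subtype.val_injective.comp g.injective
  obtain ⟨b₀, hb₀⟩ := hT
  refine ⟨Function.extend (fun x ↦ (g x : α)) (fun x ↦ (x.1 : β)) fun _ ↦ b₀, fun a ↦ ?_,
    fun b hb ↦ ⟨g (⟨b, hb⟩, 0), (g _).2, g (⟨b, hb⟩, 1), (g _).2, fun h ↦ ?_,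
      hg.extend_apply _ _ _, hg.extend_apply _ _ _⟩⟩
  · rw [Function.extend_def]
    split_ifs with h
    exacts [(Classical.choose h).1.2, hb₀]
  · simpa using hg h

namespace SimpleGraph

variable {V : Type*} {G : SimpleGraph V} {x y z : V}

lemma exists_adj_adj_of_dist_eq_two (h : G.dist x y = 2) : ∃ z, G.Adj x z ∧ G.Adj z y := by
  have hr : G.Reachable x y := Reachable.of_dist_ne_zero (by omega)
  have : G.edist x y = 2 := by rw [← hr.coe_dist_eq_edist, h]; rfl
  obtain ⟨-, -, z, hz⟩ := edist_eq_two_iff.1 this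
  rw [mem_commonNeighbors] at hz
  exact ⟨z, hz.1, hz.2.symm⟩

lemma dist_eq_two_of_adj_adj (hxy : G.Adj x y) (hyz : G.Adj y z) (hxz : x ≠ z)
    (hnadj : ¬ G.Adj x z) : G.dist x z = 2 := by
  have hle := G.dist_le (.cons hxy (.cons hyz .nil))
  have hlt := (hxy.reachable.trans hyz.reachable).one_lt_dist_of_ne_of_not_adj hxz hnadj
  simp only [Walk.length_cons, Walk.length_nil] at hle
  omega

end SimpleGraph

namespace BS

variable {V : Type*} {G : SimpleGraph V}

@[simp]
lemma adj_inl_inr {v : V} {e : G.edgeSet} :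
    (BS G).Adj (.inl v) (.inr e) ↔ v ∈ (e : Sym2 V) :=
  ⟨by rintro (⟨_, _, ⟨⟩, ⟨⟩, h⟩ | ⟨_, _, h, -⟩); exacts [h, (Sum.inl_ne_inr h).elim],
    fun h ↦ .inl ⟨v, e, rfl, rfl, h⟩⟩

@[simp]
lemma adj_inr_inl {v : V} {e : G.edgeSet} :
    (BS G).Adj (.inr e) (.inl v) ↔ v ∈ (e : Sym2 V) :=
  (BS G).adj_comm _ _ |>.trans adj_inl_inr

@[simp]
lemma not_adj_inl_inl {u v : V} : ¬ (BS G).Adj (.inl u) (.inl v) := by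
  simp [BS]

@[simp]
lemma not_adj_inr_inr {e f : G.edgeSet} : ¬ (BS G).Adj (.inr e) (.inr f) := by
  simp [BS]

def sideColoring (G : SimpleGraph V) : (BS G).Coloring Bool :=
  Coloring.mk Sum.isLeft <| by
    rintro (u | e) (v | f) h <;> simp_all

lemma even_dist_iff {x y : BSVertex G} (h : (BS G).Reachable x y) :
    Even ((BS G).dist x y) ↔ Sum.isLeft x = Sum.isLeft y := by
  obtain ⟨p, hp⟩ := h.exists_walk_length_eq_dist
  rw [← hp, (sideColoring G).even_length_iff_congr p]
  exact Bool.coe_iff_coe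

lemma reachable_inl_of_adj {u v : V} (h : G.Adj u v) :
    (BS G).Reachable (.inl u) (.inl v) :=
  Walk.reachable (.cons (adj_inl_inr.2 (Sym2.mem_mk_left u v) : (BS G).Adj _ (.inr ⟨s(u, v), h⟩))
    (.cons (adj_inr_inl.2 (Sym2.mem_mk_right u v)) .nil))

lemma dist_inl_inr_of_mem {v : V} {e : G.edgeSet} (h : v ∈ (e : Sym2 V)) :
    (BS G).dist (.inl v) (.inr e) = 1 :=
  dist_eq_one_iff_adj.2 (adj_inl_inr.2 h)

lemma dist_inr_inl_of_mem {v : V} {e : G.edgeSet} (h : v ∈ (e : Sym2 V)) :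
    (BS G).dist (.inr e) (.inl v) = 1 :=
  dist_eq_one_iff_adj.2 (adj_inr_inl.2 h)

lemma dist_inl_inl_of_adj {u v : V} (h : G.Adj u v) : (BS G).dist (.inl u) (.inl v) = 2 :=
  dist_eq_two_of_adj_adj (adj_inl_inr.2 (Sym2.mem_mk_left u v) : (BS G).Adj _ (.inr ⟨s(u, v), h⟩))
    (adj_inr_inl.2 (Sym2.mem_mk_right u v)) (Sum.inl_injective.ne h.ne) not_adj_inl_inl

lemma dist_inr_inr_of_mem {e f : G.edgeSet} (hef : e ≠ f) {z : V} (hze : z ∈ (e : Sym2 V))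
    (hzf : z ∈ (f : Sym2 V)) : (BS G).dist (.inr e) (.inr f) = 2 :=
  dist_eq_two_of_adj_adj (adj_inr_inl.2 hze) (adj_inl_inr.2 hzf) (Sum.inr_injective.ne hef)
    not_adj_inr_inr

instance [Finite V] : Finite (BSVertex G) := inferInstanceAs (Finite (V ⊕ G.edgeSet))

def star (G : SimpleGraph V) (a : V) : Set (BSVertex G) :=
  {x | Sum.elim (· = a) (fun e : G.edgeSet ↦ a ∈ (e : Sym2 V)) x}

@[simp]
lemma mem_star_inl {a v : V} : (.inl v : BSVertex G) ∈ star G a ↔ v = a := Iff.rfl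

@[simp]
lemma mem_star_inr {a : V} {e : G.edgeSet} : (.inr e : BSVertex G) ∈ star G a ↔ a ∈ (e : Sym2 V) :=
  Iff.rfl

end BS

open Classical in
noncomputable def witness {V : Type*} {G : SimpleGraph V} (a₀ : V) (τ : V → G.edgeSet) (a : V) :
    BSVertex G :=
  if a = a₀ then .inl a₀ else .inr (τ a)

section Witness

variable {V : Type*} {G : SimpleGraph V} {a₀ a : V} {τ : V → G.edgeSet}

@[simp]
lemma witness_self : witness a₀ τ a₀ = .inl a₀ := if_pos rfl

lemma witness_of_ne (h : a ≠ a₀) : witness a₀ τ a = .inr (τ a) := if_neg h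

end Witness

def IsCompleteBipartite {V : Type*} (G : SimpleGraph V) (A : Set V) : Prop :=
  ∀ u v, G.Adj u v ↔ (u ∈ A ↔ v ∉ A)

namespace IsCompleteBipartite

variable {V : Type*} {G : SimpleGraph V} {A : Set V} (hG : IsCompleteBipartite G A)
include hG

lemma adj {a b : V} (ha : a ∈ A) (hb : b ∉ A) : G.Adj a b :=
  (hG a b).2 (iff_of_true ha hb)

lemma not_adj {u v : V} (h : u ∈ A ↔ v ∈ A) : ¬ G.Adj u v := by
  rw [hG]; tauto

lemma eq_of_mem_of_mem {e : G.edgeSet} {u v : V} (hu : u ∈ (e : Sym2 V)) (hv : v ∈ (e : Sym2 V))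
    (h : u ∈ A ↔ v ∈ A) : u = v := by
  by_contra huv
  apply hG.not_adj h
  rw [← mem_edgeSet, ← (Sym2.mem_and_mem_iff huv).1 ⟨hu, hv⟩]
  exact e.2

lemma exists_eq_s (e : G.edgeSet) : ∃ a ∈ A, ∃ b ∉ A, (e : Sym2 V) = s(a, b) := by
  obtain ⟨e, he⟩ := e
  induction e using Sym2.ind with
  | _ u v =>
    by_cases hu : u ∈ A
    · exact ⟨u, hu, v, ((hG u v).1 he).1 hu, rfl⟩
    · exact ⟨v, by have := (hG u v).1 he; tauto, u, hu, Sym2.eq_swap⟩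

lemma exists_eq_s_of_mem {e : G.edgeSet} {a : V} (ha : a ∈ A) (hae : a ∈ (e : Sym2 V)) :
    ∃ b ∉ A, (e : Sym2 V) = s(a, b) := by
  obtain ⟨a', ha', b, hb, he⟩ := hG.exists_eq_s e
  obtain rfl : a = a' := hG.eq_of_mem_of_mem hae (by simp [he]) (iff_of_true ha ha')
  exact ⟨b, hb, he⟩

lemma connected_BS (hA : A.Nonempty) (hB : Aᶜ.Nonempty) : (BS G).Connected := by
  obtain ⟨a₀, ha₀⟩ := hA
  obtain ⟨b₀, hb₀⟩ := hB
  have hinl : ∀ v, (BS G).Reachable (.inl a₀) (.inl v) := by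
    intro v
    by_cases hv : v ∈ A
    · exact (BS.reachable_inl_of_adj (hG.adj ha₀ hb₀)).trans
        (BS.reachable_inl_of_adj (hG.adj hv hb₀)).symm
    · exact BS.reachable_inl_of_adj (hG.adj ha₀ hv)
  refine (connected_iff_exists_forall_reachable _).2 ⟨.inl a₀, ?_⟩
  rintro (v | e)
  · exact hinl v
  · obtain ⟨a, -, b, -, he⟩ := hG.exists_eq_s e
    exact (hinl a).trans (BS.adj_inl_inr.2 (by simp [he])).reachable

section Dist

variable (hA : A.Nonempty) (hB : Aᶜ.Nonempty)
include hA hB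

lemma dist_inl_inr_of_not_mem {v : V} {e : G.edgeSet} (h : v ∉ (e : Sym2 V)) :
    (BS G).dist (.inl v) (.inr e) = 3 := by
  have hconn := hG.connected_BS hA hB
  obtain ⟨z, hz, hvz⟩ : ∃ z ∈ (e : Sym2 V), G.Adj v z := by
    obtain ⟨a, ha, b, hb, he⟩ := hG.exists_eq_s e
    by_cases hv : v ∈ A
    · exact ⟨b, by simp [he], hG.adj hv hb⟩
    · exact ⟨a, by simp [he], (hG.adj ha hv).symm⟩
  have hle : (BS G).dist (.inl v) (.inr e) ≤ 3 :=
    calc (BS G).dist (.inl v) (.inr e)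
        ≤ (BS G).dist (.inl v) (.inl z) + (BS G).dist (.inl z) (.inr e) := hconn.dist_triangle
      _ = 3 := by rw [BS.dist_inl_inl_of_adj hvz, BS.dist_inl_inr_of_mem hz]
  have hodd := (BS.even_dist_iff (hconn (.inl v) (.inr e))).not.2 (by simp)
  have hne : (BS G).dist (.inl v) (.inr e) ≠ 1 :=
    fun h1 ↦ h (BS.adj_inl_inr.1 (dist_eq_one_iff_adj.1 h1))
  rw [Nat.even_iff] at hodd
  omega

lemma dist_inr_inl_of_not_mem {v : V} {e : G.edgeSet} (h : v ∉ (e : Sym2 V)) :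
    (BS G).dist (.inr e) (.inl v) = 3 :=
  dist_comm.trans (hG.dist_inl_inr_of_not_mem hA hB h)

lemma dist_inl_inl_of_mem_iff {u v : V} (huv : u ≠ v) (h : u ∈ A ↔ v ∈ A) :
    (BS G).dist (.inl u) (.inl v) = 4 := by
  have hconn := hG.connected_BS hA hB
  obtain ⟨w, huw, hvw⟩ : ∃ w, G.Adj u w ∧ G.Adj v w := by
    by_cases hu : u ∈ A
    · obtain ⟨b, hb⟩ := hB
      exact ⟨b, hG.adj hu hb, hG.adj (h.1 hu) hb⟩
    · obtain ⟨a, ha⟩ := hA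
      exact ⟨a, (hG.adj ha hu).symm, (hG.adj ha (mt h.2 hu)).symm⟩
  have hle : (BS G).dist (.inl u) (.inl v) ≤ 4 :=
    calc (BS G).dist (.inl u) (.inl v)
        ≤ (BS G).dist (.inl u) (.inl w) + (BS G).dist (.inl w) (.inl v) := hconn.dist_triangle
      _ = 4 := by rw [BS.dist_inl_inl_of_adj huw, BS.dist_inl_inl_of_adj hvw.symm]
  have heven := (BS.even_dist_iff (hconn (.inl u) (.inl v))).2 rfl
  have hne0 := hconn.pos_dist_of_ne (Sum.inl_injective.ne huv : (.inl u : BSVertex G) ≠ .inl v)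
  -- an edge vertex adjacent to both `u` and `v` would be an edge inside one part
  have hne2 : (BS G).dist (.inl u) (.inl v) ≠ 2 := by
    intro h2
    obtain ⟨(z | e), hu, hv⟩ := exists_adj_adj_of_dist_eq_two h2
    · exact BS.not_adj_inl_inl hu
    · exact huv (hG.eq_of_mem_of_mem (BS.adj_inl_inr.1 hu) (BS.adj_inr_inl.1 hv) h)
  rw [Nat.even_iff] at heven
  omega

lemma dist_inr_inr_of_disjoint {e f : G.edgeSet} (h : ∀ z ∈ (e : Sym2 V), z ∉ (f : Sym2 V)) :
    (BS G).dist (.inr e) (.inr f) = 4 := by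
  have hconn := hG.connected_BS hA hB
  obtain ⟨a, ha, _, _, he⟩ := hG.exists_eq_s e
  obtain ⟨_, _, b, hb, hf⟩ := hG.exists_eq_s f
  have hae : a ∈ (e : Sym2 V) := by simp [he]
  have hle : (BS G).dist (.inr e) (.inr f) ≤ 4 :=
    calc (BS G).dist (.inr e) (.inr f)
        ≤ (BS G).dist (.inr e) (.inl b) + (BS G).dist (.inl b) (.inr f) := hconn.dist_triangle
      _ ≤ ((BS G).dist (.inr e) (.inl a) + (BS G).dist (.inl a) (.inl b)) + 1 := by
          rw [BS.dist_inl_inr_of_mem (by simp [hf])]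
          exact Nat.add_le_add_right hconn.dist_triangle 1
      _ = 4 := by rw [BS.dist_inr_inl_of_mem hae, BS.dist_inl_inl_of_adj (hG.adj ha hb)]
  have heven := (BS.even_dist_iff (hconn (.inr e) (.inr f))).2 rfl
  have hne0 := hconn.pos_dist_of_ne
    (Sum.inr_injective.ne (by rintro rfl; exact h a hae hae) : (.inr e : BSVertex G) ≠ .inr f)
  have hne2 : (BS G).dist (.inr e) (.inr f) ≠ 2 := by
    intro h2
    obtain ⟨(z | g), he, hf⟩ := exists_adj_adj_of_dist_eq_two h2
    · exact h z (BS.adj_inr_inl.1 he) (BS.adj_inl_inr.1 hf)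
    · exact BS.not_adj_inr_inr he
  rw [Nat.even_iff] at heven
  omega

lemma dist_inl_ne_dist_inr (u : V) (f : G.edgeSet) (w : BSVertex G) :
    (BS G).dist (.inl u) w ≠ (BS G).dist (.inr f) w := by
  have hconn := hG.connected_BS hA hB
  intro h
  have hu := BS.even_dist_iff (hconn (.inl u) w)
  have hf := BS.even_dist_iff (hconn (.inr f) w)
  rw [h, hf] at hu
  cases hw : Sum.isLeft w <;> simp_all

lemma dist_inl_inl_ne_of_mem_of_not_mem {a₀ u v : V} (ha₀ : a₀ ∈ A) (hu : u ∈ A) (hv : v ∉ A) :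
    (BS G).dist (.inl u) (.inl a₀) ≠ (BS G).dist (.inl v) (.inl a₀) := by
  rw [BS.dist_inl_inl_of_adj (hG.adj ha₀ hv).symm]
  rcases eq_or_ne u a₀ with rfl | hu₀
  · exact dist_self.trans_ne (by decide)
  · rw [hG.dist_inl_inl_of_mem_iff hA hB hu₀ (iff_of_true hu ha₀)]; decide

lemma dist_inl_inr_ne {z z' : V} {g : G.edgeSet} (hz : z ∈ (g : Sym2 V)) (hz' : z' ∉ (g : Sym2 V)) :
    (BS G).dist (.inl z) (.inr g) ≠ (BS G).dist (.inl z') (.inr g) := by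
  rw [BS.dist_inl_inr_of_mem hz, hG.dist_inl_inr_of_not_mem hA hB hz']
  decide

lemma dist_inr_inl_ne {z : V} {e f : G.edgeSet} (he : z ∈ (e : Sym2 V)) (hf : z ∉ (f : Sym2 V)) :
    (BS G).dist (.inr e) (.inl z) ≠ (BS G).dist (.inr f) (.inl z) := by
  rw [BS.dist_inr_inl_of_mem he, hG.dist_inr_inl_of_not_mem hA hB hf]
  decide

lemma dist_inr_inr_ne_of_disjoint {z : V} {e f g : G.edgeSet} (hze : z ∈ (e : Sym2 V))
    (hzg : z ∈ (g : Sym2 V)) (hfg : ∀ y ∈ (g : Sym2 V), y ∉ (f : Sym2 V)) :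
    (BS G).dist (.inr e) (.inr g) ≠ (BS G).dist (.inr f) (.inr g) := by
  rw [hG.dist_inr_inr_of_disjoint hA hB fun y hyf hyg ↦ hfg y hyg hyf]
  rcases eq_or_ne e g with rfl | heg
  · exact dist_self.trans_ne (by decide)
  · rw [BS.dist_inr_inr_of_mem heg hze hzg]; decide

end Dist

lemma pairwiseDisjoint_star : A.PairwiseDisjoint (BS.star G) := by
  intro a ha a' ha' haa'
  rw [Function.onFun, Set.disjoint_left]
  rintro (v | e) h h'
  · exact haa' ((BS.mem_star_inl.1 h).symm.trans (BS.mem_star_inl.1 h'))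
  · exact haa' (hG.eq_of_mem_of_mem (BS.mem_star_inr.1 h) (BS.mem_star_inr.1 h')
      (iff_of_true ha ha'))

lemma mem_star_union_of_dist_ne (hB : Aᶜ.Nonempty) {a a' : V} (ha : a ∈ A) (ha' : a' ∈ A)
    {w : BSVertex G} (hw : (BS G).dist (.inl a) w ≠ (BS G).dist (.inl a') w) :
    w ∈ BS.star G a ∪ BS.star G a' := by
  have hA : A.Nonempty := ⟨a, ha⟩
  by_contra hmem
  apply hw
  rcases w with u | e
  · have hau : a ≠ u := fun h ↦ hmem (.inl h.symm)
    have ha'u : a' ≠ u := fun h ↦ hmem (.inr h.symm)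
    by_cases hu : u ∈ A
    · rw [hG.dist_inl_inl_of_mem_iff hA hB hau (iff_of_true ha hu),
        hG.dist_inl_inl_of_mem_iff hA hB ha'u (iff_of_true ha' hu)]
    · rw [BS.dist_inl_inl_of_adj (hG.adj ha hu), BS.dist_inl_inl_of_adj (hG.adj ha' hu)]
  · rw [hG.dist_inl_inr_of_not_mem hA hB fun h ↦ hmem (.inl h),
      hG.dist_inl_inr_of_not_mem hA hB fun h ↦ hmem (.inr h)]

lemma two_le_ncard_inter_star_add (hB : Aᶜ.Nonempty) [Finite V] {W : Set (BSVertex G)}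
    (hW : IsFTResolving (BS G) W) {a a' : V} (ha : a ∈ A) (ha' : a' ∈ A) (haa' : a ≠ a') :
    2 ≤ (W ∩ BS.star G a).ncard + (W ∩ BS.star G a').ncard := by
  obtain ⟨w₁, hw₁, w₂, hw₂, h12, hd₁, hd₂⟩ :=
    isFTResolving_iff.1 hW (.inl a) (.inl a') (Sum.inl_injective.ne haa')
  calc 2 = ({w₁, w₂} : Set (BSVertex G)).ncard := (Set.ncard_pair h12).symm
    _ ≤ (W ∩ BS.star G a ∪ W ∩ BS.star G a').ncard := by
        rw [← Set.inter_union_distrib_left]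
        refine Set.ncard_le_ncard (Set.insert_subset ⟨hw₁, ?_⟩ ?_)
        · exact hG.mem_star_union_of_dist_ne hB ha ha' hd₁
        · exact Set.singleton_subset_iff.2 ⟨hw₂, hG.mem_star_union_of_dist_ne hB ha ha' hd₂⟩
    _ ≤ _ := Set.ncard_union_le _ _

lemma ncard_le_ncard_of_isFTResolving [Finite V] (hB : Aᶜ.Nonempty) (hA : 1 < A.ncard)
    {W : Set (BSVertex G)} (hW : IsFTResolving (BS G) W) : A.ncard ≤ W.ncard := by
  classical
  set s := (Set.toFinite A).toFinset
  set t := fun a ↦ (Set.toFinite (W ∩ BS.star G a)).toFinset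
  calc A.ncard = s.card := Set.ncard_eq_toFinset_card A
    _ ≤ (s.biUnion t).card := by
        refine Finset.card_le_card_biUnion_of_two_le_add (by rwa [← Set.ncard_eq_toFinset_card])
          (fun a ha a' ha' haa' ↦ ?_) (fun a ha a' ha' haa' ↦ ?_)
        · simp only [s, Set.Finite.coe_toFinset] at ha ha'
          simpa [t, Function.onFun, Set.Finite.disjoint_toFinset] using
            (hG.pairwiseDisjoint_star ha ha' haa').mono Set.inter_subset_right
              Set.inter_subset_right
        · simp only [s, Set.Finite.mem_toFinset] at ha ha'
          simpa [t, ← Set.ncard_eq_toFinset_card] using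
            hG.two_le_ncard_inter_star_add hB hW ha ha' haa'
    _ ≤ (Set.toFinite W).toFinset.card := Finset.card_le_card (by simp [t])
    _ = W.ncard := (Set.ncard_eq_toFinset_card W).symm

section UpperBound

variable {a₀ : V} {τ : V → G.edgeSet} (hτ : ∀ a ∈ A, a ∈ (τ a : Sym2 V))

include hτ

lemma witness_injOn : Set.InjOn (witness a₀ τ) A := by
  intro a ha a' ha' h
  by_cases h₀ : a = a₀ <;> by_cases h₀' : a' = a₀
  · exact h₀.trans h₀'.symm
  · rw [h₀, witness_self, witness_of_ne h₀'] at h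
    cases h
  · rw [h₀', witness_self, witness_of_ne h₀] at h
    cases h
  · rw [witness_of_ne h₀, witness_of_ne h₀'] at h
    have hτa : τ a = τ a' := Sum.inr_injective h
    exact hG.eq_of_mem_of_mem (hτ a ha) (hτa ▸ hτ a' ha') (iff_of_true ha ha')

variable (hB : Aᶜ.Nonempty)
include hB

lemma dist_inl_witness_ne {u v : V} (hu : u ∈ A) (hv : v ∈ A) (huv : u ≠ v) :
    (BS G).dist (.inl u) (witness a₀ τ u) ≠ (BS G).dist (.inl v) (witness a₀ τ u) := by
  have hA : A.Nonempty := ⟨u, hu⟩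
  rcases eq_or_ne u a₀ with rfl | h₀
  · rw [witness_self, hG.dist_inl_inl_of_mem_iff hA hB huv.symm (iff_of_true hv hu)]
    exact dist_self.trans_ne (by decide)
  · rw [witness_of_ne h₀]
    exact hG.dist_inl_inr_ne hA hB (hτ u hu)
      fun h ↦ huv (hG.eq_of_mem_of_mem (hτ u hu) h (iff_of_true hu hv))

lemma dist_inr_witness_ne {e f : G.edgeSet} {u u' b : V} (hu : u ∈ A) (hu' : u' ∈ A) (hb : b ∉ A)
    (he : (e : Sym2 V) = s(u, b)) (hf : (f : Sym2 V) = s(u', b)) (huu' : u ≠ u') :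
    (BS G).dist (.inr e) (witness a₀ τ u) ≠ (BS G).dist (.inr f) (witness a₀ τ u) := by
  have hA : A.Nonempty := ⟨u, hu⟩
  have hue : u ∈ (e : Sym2 V) := by simp [he]
  have huf : u ∉ (f : Sym2 V) := by simp [hf, huu', ne_of_mem_of_not_mem hu hb]
  rcases eq_or_ne u a₀ with rfl | h₀
  · rw [witness_self]
    exact hG.dist_inr_inl_ne hA hB hue huf
  rw [witness_of_ne h₀]
  obtain ⟨c, hc, hτu⟩ := hG.exists_eq_s_of_mem hu (hτ u hu)
  rcases eq_or_ne c b with rfl | hcb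
  · have hfe : (.inr f : BSVertex G) ≠ .inr e := by
      rintro ⟨⟩; exact huf hue
    rw [show τ u = e from Subtype.ext (hτu.trans he.symm)]
    exact dist_self.trans_ne ((hG.connected_BS hA hB).pos_dist_of_ne hfe).ne
  · refine hG.dist_inr_inr_ne_of_disjoint hA hB hue (hτ u hu) fun y hy hyf ↦ ?_
    rw [hτu, Sym2.mem_iff] at hy
    rw [hf, Sym2.mem_iff] at hyf
    rcases hy with rfl | rfl
    · exact huf (by simp [hf, hyf])
    · rcases hyf with rfl | rfl
      exacts [hc hu', hcb rfl]

lemma resolvesTwice_inl_inl_of_mem {u v : V} (hu : u ∈ A) (hv : v ∈ A) (huv : u ≠ v) :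
    ResolvesTwice (BS G) (witness a₀ τ '' A) (.inl u) (.inl v) :=
  ⟨_, Set.mem_image_of_mem _ hu, _, Set.mem_image_of_mem _ hv, (hG.witness_injOn hτ).ne hu hv huv,
    hG.dist_inl_witness_ne hτ hB hu hv huv, (hG.dist_inl_witness_ne hτ hB hv hu huv.symm).symm⟩

variable (hτ₂ : ∀ b ∉ A, ∃ a₁ ∈ A \ {a₀}, ∃ a₂ ∈ A \ {a₀}, a₁ ≠ a₂ ∧
  b ∈ (τ a₁ : Sym2 V) ∧ b ∈ (τ a₂ : Sym2 V))
include hτ₂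

lemma resolvesTwice_inl_inl_of_not_mem {u v : V} (hu : u ∉ A) (hv : v ∉ A) (huv : u ≠ v) :
    ResolvesTwice (BS G) (witness a₀ τ '' A) (.inl u) (.inl v) := by
  obtain ⟨a₁, ha₁, a₂, ha₂, h12, hu₁, hu₂⟩ := hτ₂ u hu
  have hA : A.Nonempty := ⟨a₁, ha₁.1⟩
  have hv' : ∀ a, u ∈ (τ a : Sym2 V) → v ∉ (τ a : Sym2 V) := fun a hua hva ↦
    huv (hG.eq_of_mem_of_mem hua hva (iff_of_false hu hv))
  refine ⟨_, Set.mem_image_of_mem _ ha₁.1, _, Set.mem_image_of_mem _ ha₂.1,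
    (hG.witness_injOn hτ).ne ha₁.1 ha₂.1 h12, ?_, ?_⟩
  · rw [witness_of_ne ha₁.2]
    exact hG.dist_inl_inr_ne hA hB hu₁ (hv' _ hu₁)
  · rw [witness_of_ne ha₂.2]
    exact hG.dist_inl_inr_ne hA hB hu₂ (hv' _ hu₂)

omit hB in
lemma exists_witness_disjoint {b : V} (hb : b ∉ A) {f : G.edgeSet} (hbf : b ∉ (f : Sym2 V)) :
    ∃ a ∈ A \ {a₀}, b ∈ (τ a : Sym2 V) ∧ ∀ y ∈ (τ a : Sym2 V), y ∉ (f : Sym2 V) := by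
  obtain ⟨a₁, ha₁, a₂, ha₂, h12, hb₁, hb₂⟩ := hτ₂ b hb
  -- the edge `τ a = s(a, b)` can meet `f` only in `a`, and `f` has just one endpoint in `A`
  have hmeet : ∀ a ∈ A, b ∈ (τ a : Sym2 V) → (∃ y ∈ (τ a : Sym2 V), y ∈ (f : Sym2 V)) →
      a ∈ (f : Sym2 V) := by
    rintro a ha hba ⟨y, hy, hyf⟩
    rw [(Sym2.mem_and_mem_iff (ne_of_mem_of_not_mem ha hb)).1 ⟨hτ a ha, hba⟩, Sym2.mem_iff] at hy
    rcases hy with rfl | rfl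
    exacts [hyf, (hbf hyf).elim]
  by_contra! hcon
  exact h12 (hG.eq_of_mem_of_mem (hmeet a₁ ha₁.1 hb₁ (hcon a₁ ha₁ hb₁))
    (hmeet a₂ ha₂.1 hb₂ (hcon a₂ ha₂ hb₂)) (iff_of_true ha₁.1 ha₂.1))

lemma resolvesTwice_inr_inr {e f : G.edgeSet} (hef : e ≠ f) :
    ResolvesTwice (BS G) (witness a₀ τ '' A) (.inr e) (.inr f) := by
  obtain ⟨u, hu, b, hb, he⟩ := hG.exists_eq_s e
  obtain ⟨u', hu', b', hb', hf⟩ := hG.exists_eq_s f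
  have hA : A.Nonempty := ⟨u, hu⟩
  rcases eq_or_ne b b' with rfl | hbb'
  · have huu' : u ≠ u' := by
      rintro rfl
      exact hef (Subtype.ext (he.trans hf.symm))
    exact ⟨_, Set.mem_image_of_mem _ hu, _, Set.mem_image_of_mem _ hu',
      (hG.witness_injOn hτ).ne hu hu' huu', hG.dist_inr_witness_ne hτ hB hu hu' hb he hf huu',
      (hG.dist_inr_witness_ne hτ hB hu' hu hb hf he huu'.symm).symm⟩
  have hbf : b ∉ (f : Sym2 V) := by simp [hf, hbb', (ne_of_mem_of_not_mem hu' hb).symm]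
  have hb'e : b' ∉ (e : Sym2 V) := by simp [he, hbb'.symm, (ne_of_mem_of_not_mem hu hb').symm]
  obtain ⟨a, ha, hba, hdisj⟩ := hG.exists_witness_disjoint hτ hτ₂ hb hbf
  obtain ⟨a', ha', hba', hdisj'⟩ := hG.exists_witness_disjoint hτ hτ₂ hb' hb'e
  have haa' : a ≠ a' := by
    rintro rfl
    exact hbb' (hG.eq_of_mem_of_mem hba hba' (iff_of_false hb hb'))
  refine ⟨_, Set.mem_image_of_mem _ ha.1, _, Set.mem_image_of_mem _ ha'.1,
    (hG.witness_injOn hτ).ne ha.1 ha'.1 haa', ?_, ?_⟩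
  · rw [witness_of_ne ha.2]
    exact hG.dist_inr_inr_ne_of_disjoint hA hB (by simp [he]) hba hdisj
  · rw [witness_of_ne ha'.2]
    exact (hG.dist_inr_inr_ne_of_disjoint hA hB (by simp [hf]) hba' hdisj').symm

variable (ha₀ : a₀ ∈ A)
include ha₀

lemma resolvesTwice_inl_inl_of_mem_of_not_mem {u v : V} (hu : u ∈ A) (hv : v ∉ A) :
    ResolvesTwice (BS G) (witness a₀ τ '' A) (.inl u) (.inl v) := by
  have hA : A.Nonempty := ⟨u, hu⟩
  obtain ⟨a, ha, hau, hva⟩ : ∃ a ∈ A \ {a₀}, a ≠ u ∧ v ∈ (τ a : Sym2 V) := by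
    obtain ⟨a₁, ha₁, a₂, ha₂, h12, hv₁, hv₂⟩ := hτ₂ v hv
    by_cases h : a₁ = u
    · exact ⟨a₂, ha₂, fun h₂ ↦ h12 (h.trans h₂.symm), hv₂⟩
    · exact ⟨a₁, ha₁, h, hv₁⟩
  refine ⟨_, Set.mem_image_of_mem _ ha₀, _, Set.mem_image_of_mem _ ha.1,
    (hG.witness_injOn hτ).ne ha₀ ha.1 (Ne.symm ha.2), ?_, ?_⟩
  · rw [witness_self]
    exact hG.dist_inl_inl_ne_of_mem_of_not_mem hA hB ha₀ hu hv
  · rw [witness_of_ne ha.2]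
    exact (hG.dist_inl_inr_ne hA hB hva
      fun h ↦ hau (hG.eq_of_mem_of_mem (hτ a ha.1) h (iff_of_true ha.1 hu))).symm

lemma resolvesTwice_inl_inr (u : V) (f : G.edgeSet) :
    ResolvesTwice (BS G) (witness a₀ τ '' A) (.inl u) (.inr f) := by
  obtain ⟨b, hb⟩ := hB
  obtain ⟨a, ha, -⟩ := hτ₂ b hb
  exact ⟨_, Set.mem_image_of_mem _ ha₀, _, Set.mem_image_of_mem _ ha.1,
    (hG.witness_injOn hτ).ne ha₀ ha.1 (Ne.symm ha.2),
    hG.dist_inl_ne_dist_inr ⟨a₀, ha₀⟩ ⟨b, hb⟩ _ _ _,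
    hG.dist_inl_ne_dist_inr ⟨a₀, ha₀⟩ ⟨b, hb⟩ _ _ _⟩

lemma isFTResolving_witness : IsFTResolving (BS G) (witness a₀ τ '' A) := by
  refine isFTResolving_iff.2 ?_
  rintro (u | e) (v | f) hxy
  · have huv : u ≠ v := fun h ↦ hxy (h ▸ rfl)
    by_cases hu : u ∈ A <;> by_cases hv : v ∈ A
    · exact hG.resolvesTwice_inl_inl_of_mem hτ hB hu hv huv
    · exact hG.resolvesTwice_inl_inl_of_mem_of_not_mem hτ hB hτ₂ ha₀ hu hv
    · exact (hG.resolvesTwice_inl_inl_of_mem_of_not_mem hτ hB hτ₂ ha₀ hv hu).symm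
    · exact hG.resolvesTwice_inl_inl_of_not_mem hτ hB hτ₂ hu hv huv
  · exact hG.resolvesTwice_inl_inr hτ hB hτ₂ ha₀ u f
  · exact (hG.resolvesTwice_inl_inr hτ hB hτ₂ ha₀ v e).symm
  · exact hG.resolvesTwice_inr_inr hτ hB hτ₂ fun h ↦ hxy (h ▸ rfl)

end UpperBound

lemma exists_isFTResolving_ncard_eq [Finite V] (hB : Aᶜ.Nonempty) (hAB : 2 * Aᶜ.ncard < A.ncard) :
    ∃ W : Set (BSVertex G), IsFTResolving (BS G) W ∧ W.ncard = A.ncard := by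
  classical
  obtain ⟨a₀, ha₀⟩ : A.Nonempty := Set.nonempty_of_ncard_ne_zero (by omega)
  obtain ⟨b₀, hb₀⟩ := hB
  obtain ⟨c, hcB, hc⟩ := exists_map_with_two_preimages (A \ {a₀}) Aᶜ ⟨b₀, hb₀⟩
    (by rw [Set.ncard_sdiff_singleton_of_mem ha₀]; omega)
  have : ∀ a, ∃ e : G.edgeSet, a ∈ A → (e : Sym2 V) = s(a, c a) := fun a ↦
    if ha : a ∈ A then ⟨⟨s(a, c a), hG.adj ha (hcB a)⟩, fun _ ↦ rfl⟩
    else ⟨⟨s(a₀, b₀), hG.adj ha₀ hb₀⟩, fun h ↦ (ha h).elim⟩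
  choose τ hτ using this
  have hτ₁ : ∀ a ∈ A, a ∈ (τ a : Sym2 V) := fun a ha ↦ by simp [hτ a ha]
  have hτ₂ : ∀ b ∉ A, ∃ a₁ ∈ A \ {a₀}, ∃ a₂ ∈ A \ {a₀}, a₁ ≠ a₂ ∧
      b ∈ (τ a₁ : Sym2 V) ∧ b ∈ (τ a₂ : Sym2 V) := by
    intro b hb
    obtain ⟨a₁, ha₁, a₂, ha₂, h12, rfl, h₂⟩ := hc b hb
    exact ⟨a₁, ha₁, a₂, ha₂, h12, by simp [hτ a₁ ha₁.1], by simp [hτ a₂ ha₂.1, h₂]⟩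
  exact ⟨_, hG.isFTResolving_witness hτ₁ ⟨b₀, hb₀⟩ hτ₂ ha₀, (hG.witness_injOn hτ₁).ncard_image⟩

theorem ftMetricDim_BS_eq_ncard [Finite V] (hB : Aᶜ.Nonempty) (hAB : 2 * Aᶜ.ncard < A.ncard) :
    ftMetricDim (BS G) = A.ncard := by
  obtain ⟨W, hW, hWA⟩ := hG.exists_isFTResolving_ncard_eq hB hAB
  refine le_antisymm (Nat.sInf_le ⟨W, hW, hWA⟩) ?_
  obtain ⟨W', hW', hW'card⟩ : ftMetricDim (BS G) ∈
      {k | ∃ W : Set (BSVertex G), IsFTResolving (BS G) W ∧ W.ncard = k} :=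
    Nat.sInf_mem ⟨_, W, hW, hWA⟩
  rw [← hW'card]
  have := (Set.ncard_pos (Set.toFinite _)).2 hB
  exact hG.ncard_le_ncard_of_isFTResolving hB (by omega) hW'

end IsCompleteBipartite

section ZeroDivisorGraph

variable {K L : Type*} [CommRing K] [IsDomain K] [CommRing L] [IsDomain L]

lemma Prod.exists_ne_zero_mul_eq_zero_iff {z : K × L} :
    (z ≠ 0 ∧ ∃ w, w ≠ 0 ∧ z * w = 0) ↔ (z.1 = 0 ↔ z.2 ≠ 0) := by
  constructor
  · rintro ⟨hz, w, hw, hzw⟩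
    rw [Ne, Prod.ext_iff] at hz hw
    rw [Prod.ext_iff] at hzw
    simp only [Prod.fst_mul, Prod.snd_mul, Prod.fst_zero, Prod.snd_zero, mul_eq_zero] at *
    tauto
  · intro h
    by_cases h₁ : z.1 = 0
    · exact ⟨fun h₀ ↦ h.1 h₁ (congrArg Prod.snd h₀), (1, 0), by simp, by ext <;> simp [h₁]⟩
    · exact ⟨fun h₀ ↦ h₁ (congrArg Prod.fst h₀), (0, 1), by simp,
        by ext <;> simp [not_not.1 (mt h.2 h₁)]⟩

lemma Prod.mul_eq_zero_iff_of_fst_eq_zero_iff {z w : K × L} (hz : z.1 = 0 ↔ z.2 ≠ 0)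
    (hw : w.1 = 0 ↔ w.2 ≠ 0) : z * w = 0 ↔ (z.1 = 0 ↔ w.1 ≠ 0) := by
  rw [Prod.ext_iff]
  simp only [Prod.fst_mul, Prod.snd_mul, Prod.fst_zero, Prod.snd_zero, mul_eq_zero]
  tauto

variable {n : ℕ} (φ : ZMod n ≃+* K × L)

lemma isZDVertex_iff (x : ZMod n) :
    (x ≠ 0 ∧ ∃ y : ZMod n, y ≠ 0 ∧ x * y = 0) ↔ ((φ x).1 = 0 ↔ (φ x).2 ≠ 0) := by
  rw [← Prod.exists_ne_zero_mul_eq_zero_iff, map_ne_zero_iff φ φ.injective]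
  refine and_congr_right fun _ ↦
    ⟨fun ⟨y, hy, hxy⟩ ↦ ⟨φ y, ?_, ?_⟩, fun ⟨w, hw, hxw⟩ ↦ ⟨φ.symm w, ?_, ?_⟩⟩
  · exact (map_ne_zero_iff φ φ.injective).2 hy
  · rw [← map_mul, hxy, map_zero]
  · exact (map_ne_zero_iff φ.symm φ.symm.injective).2 hw
  · exact φ.injective (by rw [map_mul, φ.apply_symm_apply, hxw, map_zero])

theorem isCompleteBipartite_zdGraph : IsCompleteBipartite (zdGraph n) {v | (φ v.1).1 = 0} := by
  intro u v
  change u ≠ v ∧ u.1 * v.1 = 0 ↔ ((φ u.1).1 = 0 ↔ ¬ (φ v.1).1 = 0)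
  rw [← map_eq_zero_iff φ φ.injective, map_mul, Prod.mul_eq_zero_iff_of_fst_eq_zero_iff
    ((isZDVertex_iff φ u.1).1 u.2) ((isZDVertex_iff φ v.1).1 v.2)]
  exact ⟨And.right, fun h ↦ ⟨by rintro rfl; tauto, h⟩⟩

lemma ncard_setOf_fst_eq_zero [Finite L] :
    {v : ZDVertex n | (φ v.1).1 = 0}.ncard = Nat.card L - 1 := by
  rw [← Set.ncard_singleton (0 : L), ← Set.ncard_compl]
  refine Set.ncard_congr (fun v _ ↦ (φ v.1).2) (fun v hv ↦ ((isZDVertex_iff φ v.1).1 v.2).1 hv)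
    (fun v w hv hw h ↦ Subtype.ext (φ.injective (Prod.ext (hv.trans hw.symm) h))) fun y hy ↦ ?_
  refine ⟨⟨φ.symm (0, y), (isZDVertex_iff φ _).2 ?_⟩, ?_, ?_⟩
  · simpa using hy
  · change (φ (φ.symm (0, y))).1 = 0
    simp
  · simp

lemma compl_setOf_fst_eq_zero :
    {v : ZDVertex n | (φ v.1).1 = 0}ᶜ = {v | ((φ.trans RingEquiv.prodComm) v.1).1 = 0} := by
  ext v
  have := (isZDVertex_iff φ v.1).1 v.2
  change ¬ (φ v.1).1 = 0 ↔ (φ v.1).2 = 0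
  tauto

end ZeroDivisorGraph

theorem ftMetricDim_BS_zdGraph_eq_q_sub_one_general (p q : ℕ) (hp : p.Prime) (hq : q.Prime)
    (h : q > 2 * p - 1) :
    ftMetricDim (BS (zdGraph (p * q))) = q - 1 := by
  have := Fact.mk hp
  have := Fact.mk hq
  have : NeZero (p * q) := ⟨Nat.mul_ne_zero hp.ne_zero hq.ne_zero⟩
  have : Finite (ZDVertex (p * q)) := Subtype.finite
  have := hp.two_le
  let φ := ZMod.chineseRemainder ((Nat.coprime_primes hp hq).2 (by omega))
  have hA := ncard_setOf_fst_eq_zero φ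
  have hB := ncard_setOf_fst_eq_zero (φ.trans RingEquiv.prodComm)
  rw [← compl_setOf_fst_eq_zero] at hB
  rw [Nat.card_zmod] at hA hB
  rw [(isCompleteBipartite_zdGraph φ).ftMetricDim_BS_eq_ncard
    (Set.nonempty_of_ncard_ne_zero (by omega)) (by omega), hA]

theorem ftMetricDim_BS_zdGraph_eq_q_sub_one (p q : ℕ) (hp : p.Prime) (hq : q.Prime)
    (hpodd : Odd p) (hqodd : Odd q) (hne : p ≠ q) (hpq : q > p) (h : q > 2 * p - 1) :
    ftMetricDim (BS (zdGraph (p * q))) = q - 1 :=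
  ftMetricDim_BS_zdGraph_eq_q_sub_one_general p q hp hq h
end

section
/- Let p and q be distinct odd primes with q > p. Then the fault-tolerant metric dimension of the barycentric subdivision of the zero divisor graph of Z_{pq} is at least q - 1, i.e. fdim(BS(Γ(Z_{pq}))) ≥ q - 1. -/
open SimpleGraph

/-
The vertices `p * i`, `0 < i < q`, of `Γ(ℤ/pq)` all have the same neighbours (the nonzero
multiples of `q`), so swapping two of them is an automorphism. In the subdivision it exchanges the
midpoints of the edges `p * i – q` and `p * j – q` and fixes every vertex outside the stars of
`p * i` and `p * j`; since automorphisms preserve distances, every resolving set meets the union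
of these two stars, and a fault-tolerant one meets it twice. The `q - 1` stars are pairwise
disjoint, so at most one of them misses the resolving set and the others are hit at least twice.
-/

namespace SimpleGraph

variable {V V' : Type*} {G : SimpleGraph V} {G' : SimpleGraph V'}

lemma edist_map_le (f : G →g G') (u v : V) : G'.edist (f u) (f v) ≤ G.edist u v := by
  by_cases h : G.Reachable u v
  · obtain ⟨w, hw⟩ := h.exists_walk_length_eq_edist
    rw [← hw, ← Walk.length_map f w]
    exact edist_le _
  · rw [edist_eq_top_of_not_reachable h]
    exact le_top

lemma Iso.edist_eq (f : G ≃g G') (u v : V) : G'.edist (f u) (f v) = G.edist u v :=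
  le_antisymm (edist_map_le f.toHom u v) <| by
    simpa using edist_map_le f.symm.toHom (f u) (f v)

lemma Iso.dist_eq (f : G ≃g G') (u v : V) : G'.dist (f u) (f v) = G.dist u v := by
  rw [dist, dist, f.edist_eq]

def Twins (G : SimpleGraph V) (u v : V) : Prop := ∀ w, G.Adj u w ↔ G.Adj v w

lemma Twins.not_adj {u v : V} (h : G.Twins u v) : ¬ G.Adj u v :=
  fun huv => G.loopless.irrefl v ((h v).1 huv)

def Twins.swapIso [DecidableEq V] {u v : V} (h : G.Twins u v) : G ≃g G where
  toEquiv := Equiv.swap u v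
  map_rel_iff' {x y} := by
    have swap_adj : ∀ x y, G.Adj (Equiv.swap u v x) y ↔ G.Adj x y := by
      intro x y
      rcases eq_or_ne x u with rfl | hxu
      · rw [Equiv.swap_apply_left, h]
      rcases eq_or_ne x v with rfl | hxv
      · rw [Equiv.swap_apply_right, h]
      rw [Equiv.swap_apply_of_ne_of_ne hxu hxv]
    rw [swap_adj, G.adj_comm, swap_adj, G.adj_comm]

lemma Twins.swapIso_apply [DecidableEq V] {u v : V} (h : G.Twins u v) (x : V) :
    h.swapIso x = Equiv.swap u v x := rfl

end SimpleGraph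

section Subdivision

variable {V V' : Type*} {G : SimpleGraph V} {G' : SimpleGraph V'}

instance [Finite V] : Finite (BSVertex G) := inferInstanceAs (Finite (V ⊕ G.edgeSet))

@[simp] lemma BS_adj_inl_inr (v : V) (e : G.edgeSet) :
    (BS G).Adj (Sum.inl v) (Sum.inr e) ↔ v ∈ (e : Sym2 V) := by
  refine ⟨?_, fun h => Or.inl ⟨v, e, rfl, rfl, h⟩⟩
  rintro (⟨w, f, hv, he, h⟩ | ⟨-, -, ⟨⟩, -⟩)
  cases Sum.inl.inj hv
  cases Sum.inr.inj he
  exact h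

@[simp] lemma BS_adj_inr_inl (e : G.edgeSet) (v : V) :
    (BS G).Adj (Sum.inr e) (Sum.inl v) ↔ v ∈ (e : Sym2 V) :=
  ((BS G).adj_comm _ _).trans (BS_adj_inl_inr v e)

@[simp] lemma BS_not_adj_inl_inl (u v : V) : ¬ (BS G).Adj (Sum.inl u) (Sum.inl v) := by
  rintro (⟨-, -, -, ⟨⟩, -⟩ | ⟨-, -, ⟨⟩, -⟩)

@[simp] lemma BS_not_adj_inr_inr (e e' : G.edgeSet) : ¬ (BS G).Adj (Sum.inr e) (Sum.inr e') := by
  rintro (⟨-, -, ⟨⟩, -⟩ | ⟨-, -, -, ⟨⟩, -⟩)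

lemma BS_reachable_inl_of_adj {u v : V} (h : G.Adj u v) :
    (BS G).Reachable (Sum.inl u) (Sum.inl v) :=
  ((BS_adj_inl_inr u ⟨s(u, v), h⟩).2 (Sym2.mem_mk_left u v)).reachable.trans
    ((BS_adj_inr_inl ⟨s(u, v), h⟩ v).2 (Sym2.mem_mk_right u v)).reachable

lemma BS_preconnected (hG : G.Preconnected) : (BS G).Preconnected := by
  have reach_inl (u v : V) : (BS G).Reachable (Sum.inl u) (Sum.inl v) := by
    refine (reachable_iff_reflTransGen (G := BS G) _ _).2 ?_
    exact ((reachable_iff_reflTransGen u v).1 (hG u v)).lift' Sum.inl fun a b hab =>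
      (reachable_iff_reflTransGen _ _).1 (BS_reachable_inl_of_adj hab)
  have reach_some_inl : ∀ x : BSVertex G, ∃ v, (BS G).Reachable x (Sum.inl v)
    | Sum.inl v => ⟨v, .rfl⟩
    | Sum.inr e => ⟨_, ((BS_adj_inr_inl e _).2 (e : Sym2 V).out_fst_mem).reachable⟩
  intro x y
  obtain ⟨u, hu⟩ := reach_some_inl x
  obtain ⟨v, hv⟩ := reach_some_inl y
  exact hu.trans ((reach_inl u v).trans hv.symm)

def BS.mapIso (f : G ≃g G') : BS G ≃g BS G' where
  toEquiv := Equiv.sumCongr f.toEquiv f.mapEdgeSet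
  map_rel_iff' {x y} := by
    have mem_map (v : V) (e : G.edgeSet) :
        f v ∈ ((f.mapEdgeSet e : G'.edgeSet) : Sym2 V') ↔ v ∈ (e : Sym2 V) :=
      Sym2.mem_map.trans ⟨fun ⟨w, hw, hwv⟩ => f.injective hwv ▸ hw, fun h => ⟨v, h, rfl⟩⟩
    rcases x with u | e <;> rcases y with v | e'
    · exact iff_of_false (BS_not_adj_inl_inl _ _) (BS_not_adj_inl_inl _ _)
    · exact (BS_adj_inl_inr (f u) (f.mapEdgeSet e')).trans
        ((mem_map u e').trans (BS_adj_inl_inr u e').symm)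
    · exact (BS_adj_inr_inl (f.mapEdgeSet e) (f v)).trans
        ((mem_map v e).trans (BS_adj_inr_inl e v).symm)
    · exact iff_of_false (BS_not_adj_inr_inr _ _) (BS_not_adj_inr_inr _ _)

/-- The vertices of `BS G` incident to `v`: `v` itself and the midpoints of the edges at `v`. -/
def bsStar (G : SimpleGraph V) (v : V) : Set (BSVertex G) :=
  Sum.elim (· = v) (fun e => v ∈ (e : Sym2 V))

lemma disjoint_bsStar {u v : V} (huv : u ≠ v) (hadj : ¬ G.Adj u v) :
    Disjoint (bsStar G u) (bsStar G v) := by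
  refine Set.disjoint_left.2 ?_
  rintro (w | e) hu hv
  · exact huv (hu.symm.trans hv)
  · have he : (e : Sym2 V) = s(u, v) :=
      Sym2.eq_of_ne_mem huv hu hv (Sym2.mem_mk_left u v) (Sym2.mem_mk_right u v)
    exact hadj (G.mem_edgeSet.1 (he ▸ e.2))

lemma BS.mapIso_apply_eq_self (f : G ≃g G) {x : BSVertex G} (hx : ∀ v, x ∈ bsStar G v → f v = v) :
    BS.mapIso f x = x := by
  rcases x with v | e
  · exact congrArg Sum.inl (hx v rfl)
  · refine congrArg Sum.inr (Subtype.ext ?_)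
    exact (Sym2.map_congr fun v hv => hx v hv).trans (congrFun Sym2.map_id' _)

lemma SimpleGraph.Twins.mapIso_swapIso_apply_eq_self [DecidableEq V] {u v : V} (h : G.Twins u v)
    {x : BSVertex G} (hx : x ∉ bsStar G u ∪ bsStar G v) : BS.mapIso h.swapIso x = x :=
  BS.mapIso_apply_eq_self _ fun w hw => Equiv.swap_apply_of_ne_of_ne
    (by rintro rfl; exact hx (Or.inl hw)) (by rintro rfl; exact hx (Or.inr hw))

end Subdivision

section Resolving

variable {V : Type*} {G : SimpleGraph V} {W : Set V}

lemma isResolving_of_forall_mem_or_mem (hG : G.Preconnected)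
    (hW : ∀ x y, x ≠ y → x ∈ W ∨ y ∈ W) : IsResolving G W := by
  intro x y hxy
  rcases hW x y hxy with hx | hy
  · exact ⟨x, hx, by rw [dist_self]; exact ((hG y x).pos_dist_of_ne hxy.symm).ne⟩
  · exact ⟨y, hy, by rw [dist_self]; exact ((hG x y).pos_dist_of_ne hxy).ne'⟩

lemma isFTResolving_univ (hG : G.Preconnected) : IsFTResolving G Set.univ := by
  refine ⟨isResolving_of_forall_mem_or_mem hG fun x _ _ => Or.inl trivial,
    fun w _ => isResolving_of_forall_mem_or_mem hG fun x y hxy => ?_⟩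
  rcases eq_or_ne x w with rfl | hxw
  · exact Or.inr ⟨trivial, hxy.symm⟩
  · exact Or.inl ⟨trivial, hxw⟩

lemma le_ftMetricDim {k : ℕ} (hne : ∃ W, IsFTResolving G W)
    (h : ∀ W, IsFTResolving G W → k ≤ W.ncard) : k ≤ ftMetricDim G := by
  obtain ⟨W, hW⟩ := hne
  exact le_csInf ⟨_, W, hW, rfl⟩ (by rintro _ ⟨W, hW, rfl⟩; exact h W hW)

lemma IsResolving.exists_apply_ne (hW : IsResolving G W) (f : G ≃g G) {x : V} (hx : f x ≠ x) :
    ∃ w ∈ W, f w ≠ w := by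
  obtain ⟨w, hwW, hw⟩ := hW _ _ hx
  refine ⟨w, hwW, fun hfw => hw ?_⟩
  calc G.dist (f x) w = G.dist (f x) (f w) := by rw [hfw]
    _ = G.dist x w := f.dist_eq x w

lemma IsFTResolving.one_lt_ncard_inter_apply_ne [Finite V] (hW : IsFTResolving G W) (f : G ≃g G)
    {x : V} (hx : f x ≠ x) : 1 < (W ∩ {w | f w ≠ w}).ncard := by
  obtain ⟨w₁, hw₁W, hw₁⟩ := hW.1.exists_apply_ne f hx
  obtain ⟨w₂, ⟨hw₂W, hw₂₁⟩, hw₂⟩ := (hW.2 w₁ hw₁W).exists_apply_ne f hx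
  exact (Set.one_lt_ncard_iff).2 ⟨w₁, w₂, ⟨hw₁W, hw₁⟩, ⟨hw₂W, hw₂⟩, fun h => hw₂₁ h.symm⟩

end Resolving

lemma Finset.card_le_sum_of_two_le_add {ι : Type*} {s : Finset ι} {f : ι → ℕ} (hs : 2 ≤ s.card)
    (h : ∀ i ∈ s, ∀ j ∈ s, i ≠ j → 2 ≤ f i + f j) : s.card ≤ ∑ i ∈ s, f i := by
  classical
  by_cases hpos : ∀ i ∈ s, 1 ≤ f i
  · simpa using s.card_nsmul_le_sum f 1 hpos
  obtain ⟨i₀, hi₀, hf⟩ : ∃ i ∈ s, f i = 0 := by simpa [Nat.one_le_iff_ne_zero] using hpos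
  have two_le (i) (hi : i ∈ s.erase i₀) : 2 ≤ f i := by
    have := h i (mem_of_mem_erase hi) i₀ hi₀ (ne_of_mem_erase hi)
    omega
  calc s.card ≤ (s.erase i₀).card * 2 := by rw [card_erase_of_mem hi₀]; omega
    _ ≤ ∑ i ∈ s.erase i₀, f i := by simpa using (s.erase i₀).card_nsmul_le_sum f 2 two_le
    _ ≤ ∑ i ∈ s, f i := sum_le_sum_of_subset (erase_subset i₀ s)

lemma Set.sum_ncard_inter_le {ι α : Type*} {s : Finset ι} {T : ι → Set α} {W : Set α}
    (hT : (s : Set ι).PairwiseDisjoint T) (hW : W.Finite) :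
    ∑ i ∈ s, (W ∩ T i).ncard ≤ W.ncard := by
  rw [← finsum_mem_coe_finset, ← s.finite_toSet.ncard_biUnion (fun i _ => hW.inter_of_left _)
    (hT.mono fun i => Set.inter_subset_right)]
  exact Set.ncard_le_ncard (Set.iUnion₂_subset fun i _ => Set.inter_subset_left) hW

theorem card_le_ncard_of_isFTResolving_BS {V ι : Type*} [Finite V] [Fintype ι]
    {G : SimpleGraph V} {a : ι → V} (ha : Function.Injective a) (htw : ∀ i j, G.Twins (a i) (a j))
    {c : V} (hc : ∀ i, G.Adj (a i) c) (hι : 2 ≤ Fintype.card ι) {W : Set (BSVertex G)}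
    (hW : IsFTResolving (BS G) W) : Fintype.card ι ≤ W.ncard := by
  classical
  have hdisj : ((Finset.univ : Finset ι) : Set ι).PairwiseDisjoint (fun i => bsStar G (a i)) :=
    fun i _ j _ hij => disjoint_bsStar (ha.ne hij) (htw i j).not_adj
  refine (Finset.card_le_sum_of_two_le_add hι fun i _ j _ hij => ?_).trans
    (Set.sum_ncard_inter_le hdisj W.toFinite)
  let f := BS.mapIso (htw i j).swapIso
  let x : BSVertex G := Sum.inr ⟨s(a i, c), hc i⟩
  have hfx : f x ≠ x := by
    intro hfx
    have hc' : Equiv.swap (a i) (a j) c = c :=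
      Equiv.swap_apply_of_ne_of_ne (hc i).ne' (hc j).ne'
    have : s(a j, c) = s(a i, c) := by
      simpa [f, x, Twins.swapIso_apply, Sym2.map_mk, hc'] using
        congrArg Subtype.val (Sum.inr.inj hfx)
    exact hij (ha (Sym2.congr_left.1 this).symm)
  have hmoved : {w | f w ≠ w} ⊆ bsStar G (a i) ∪ bsStar G (a j) := fun w hw =>
    by_contra fun h => hw ((htw i j).mapIso_swapIso_apply_eq_self h)
  calc 2 ≤ (W ∩ {w | f w ≠ w}).ncard := hW.one_lt_ncard_inter_apply_ne f hfx
    _ ≤ (W ∩ (bsStar G (a i) ∪ bsStar G (a j))).ncard :=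
      Set.ncard_le_ncard (Set.inter_subset_inter_right W hmoved)
    _ ≤ _ := by
      rw [Set.inter_union_distrib_left]
      exact Set.ncard_union_le _ _

section ZeroDivisorGraph

instance {n : ℕ} [NeZero n] : Finite (ZDVertex n) :=
  inferInstanceAs (Finite {x : ZMod n // x ≠ 0 ∧ ∃ y : ZMod n, y ≠ 0 ∧ x * y = 0})

lemma zdGraph_adj_iff_of_mul_self_ne_zero {n : ℕ} {u : ZDVertex n} (hu : u.1 * u.1 ≠ 0)
    (v : ZDVertex n) : (zdGraph n).Adj u v ↔ u.1 * v.1 = 0 :=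
  ⟨And.right, fun h => ⟨by rintro rfl; exact hu h, h⟩⟩

lemma ZDVertex.not_coprime_val {n : ℕ} [NeZero n] (v : ZDVertex n) : ¬ v.1.val.Coprime n := by
  obtain ⟨-, y, hy, hvy⟩ := v.2
  rw [← ZMod.isUnit_iff_coprime, ZMod.natCast_zmod_val]
  exact fun hv => hy (hv.mul_right_eq_zero.1 hvy)

lemma ZMod.natCast_ne_zero_of_pos_of_lt {n a : ℕ} (h0 : 0 < a) (h : a < n) : (a : ZMod n) ≠ 0 := by
  rw [Ne, ZMod.natCast_eq_zero_iff]
  exact Nat.not_dvd_of_pos_of_lt h0 h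

variable {p q : ℕ}

lemma natCast_mul_mul_natCast_eq_zero_iff (hp : 0 < p) (hq : q.Prime) {m : ℕ} (hm : ¬ q ∣ m)
    (x : ℕ) : ((p * m : ℕ) : ZMod (p * q)) * x = 0 ↔ q ∣ x := by
  rw [← Nat.cast_mul, ZMod.natCast_eq_zero_iff, mul_assoc, Nat.mul_dvd_mul_iff_left hp,
    ((Nat.Prime.coprime_iff_not_dvd hq).2 hm).dvd_mul_left]

lemma ZDVertex.dvd_or_dvd_val (hp : p.Prime) (hq : q.Prime) (v : ZDVertex (p * q)) :
    p ∣ v.1.val ∨ q ∣ v.1.val := by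
  have := NeZero.of_pos (Nat.mul_pos hp.pos hq.pos)
  by_contra! h
  exact v.not_coprime_val (Nat.Coprime.mul_right ((hp.coprime_iff_not_dvd.2 h.1).symm)
    ((hq.coprime_iff_not_dvd.2 h.2).symm))

def qVertex (hp : p.Prime) (hq : q.Prime) : ZDVertex (p * q) :=
  ⟨(q : ℕ), ZMod.natCast_ne_zero_of_pos_of_lt hq.pos (lt_mul_left hq.pos hp.one_lt), (p : ℕ),
    ZMod.natCast_ne_zero_of_pos_of_lt hp.pos (lt_mul_right hp.pos hq.one_lt), by
    rw [← Nat.cast_mul, ZMod.natCast_eq_zero_iff, mul_comm]⟩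

lemma Fin.not_dvd_succ_val {q : ℕ} (i : Fin (q - 1)) : ¬ q ∣ (i : ℕ) + 1 :=
  Nat.not_dvd_of_pos_of_lt i.succ_pos (by omega)

lemma pMul_mul_self_ne_zero (hp : p.Prime) (hq : q.Prime) (hpq : p < q) (i : Fin (q - 1)) :
    ((p * ((i : ℕ) + 1) : ℕ) : ZMod (p * q)) * ((p * ((i : ℕ) + 1) : ℕ) : ZMod (p * q)) ≠ 0 := by
  rw [Ne, natCast_mul_mul_natCast_eq_zero_iff hp.pos hq i.not_dvd_succ_val]
  exact hq.dvd_mul.not.2 <| not_or.2 ⟨Nat.not_dvd_of_pos_of_lt hp.pos hpq, i.not_dvd_succ_val⟩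

/-- The `q - 1` nonzero multiples `p * (i + 1)` of `p` in `ℤ/pq`. -/
def pMulVertex (hp : p.Prime) (hq : q.Prime) (hpq : p < q) (i : Fin (q - 1)) :
    ZDVertex (p * q) :=
  ⟨(p * ((i : ℕ) + 1) : ℕ), left_ne_zero_of_mul (pMul_mul_self_ne_zero hp hq hpq i), (q : ℕ),
    (qVertex hp hq).2.1,
    (natCast_mul_mul_natCast_eq_zero_iff hp.pos hq i.not_dvd_succ_val q).2 dvd_rfl⟩

lemma pMulVertex_mul_eq_zero_iff (hp : p.Prime) (hq : q.Prime) (hpq : p < q) (i : Fin (q - 1))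
    (x : ZMod (p * q)) : (pMulVertex hp hq hpq i).1 * x = 0 ↔ q ∣ x.val := by
  have := NeZero.of_pos (Nat.mul_pos hp.pos hq.pos)
  conv_lhs => rw [← ZMod.natCast_zmod_val x]
  exact natCast_mul_mul_natCast_eq_zero_iff hp.pos hq i.not_dvd_succ_val _

lemma pMulVertex_adj_iff (hp : p.Prime) (hq : q.Prime) (hpq : p < q) (i : Fin (q - 1))
    (v : ZDVertex (p * q)) : (zdGraph (p * q)).Adj (pMulVertex hp hq hpq i) v ↔ q ∣ v.1.val :=
  (zdGraph_adj_iff_of_mul_self_ne_zero (pMul_mul_self_ne_zero hp hq hpq i) v).trans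
    (pMulVertex_mul_eq_zero_iff hp hq hpq i v.1)

lemma pMulVertex_twins (hp : p.Prime) (hq : q.Prime) (hpq : p < q) (i j : Fin (q - 1)) :
    (zdGraph (p * q)).Twins (pMulVertex hp hq hpq i) (pMulVertex hp hq hpq j) := fun v => by
  rw [pMulVertex_adj_iff, pMulVertex_adj_iff]

lemma pMulVertex_adj_qVertex (hp : p.Prime) (hq : q.Prime) (hpq : p < q) (i : Fin (q - 1)) :
    (zdGraph (p * q)).Adj (pMulVertex hp hq hpq i) (qVertex hp hq) :=
  (zdGraph_adj_iff_of_mul_self_ne_zero (pMul_mul_self_ne_zero hp hq hpq i) _).2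
    ((natCast_mul_mul_natCast_eq_zero_iff hp.pos hq i.not_dvd_succ_val q).2 dvd_rfl)

lemma pMulVertex_injective (hp : p.Prime) (hq : q.Prime) (hpq : p < q) :
    Function.Injective (pMulVertex hp hq hpq) := by
  intro i j hij
  have hval := congrArg Subtype.val hij
  have hlt (k : Fin (q - 1)) : p * ((k : ℕ) + 1) < p * q :=
    (Nat.mul_lt_mul_left hp.pos).2 (by omega)
  simp only [pMulVertex, ZMod.natCast_eq_natCast_iff', Nat.mod_eq_of_lt (hlt i),
    Nat.mod_eq_of_lt (hlt j)] at hval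
  exact Fin.ext (by simpa using Nat.eq_of_mul_eq_mul_left hp.pos hval)

lemma qVertex_mul_self_ne_zero (hp : p.Prime) (hq : q.Prime) (hpq : p ≠ q) :
    (qVertex hp hq).1 * (qVertex hp hq).1 ≠ 0 := by
  show ((q : ℕ) : ZMod (p * q)) * (q : ℕ) ≠ 0
  rw [Ne, ← Nat.cast_mul, ZMod.natCast_eq_zero_iff]
  exact fun h => hpq ((Nat.prime_dvd_prime_iff_eq hp hq).1 (Nat.dvd_of_mul_dvd_mul_right hq.pos h))

lemma zdGraph_preconnected (hp : p.Prime) (hq : q.Prime) (hpq : p < q) :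
    (zdGraph (p * q)).Preconnected := by
  have := NeZero.of_pos (Nat.mul_pos hp.pos hq.pos)
  let a := pMulVertex hp hq hpq ⟨0, by have := hp.two_le; omega⟩
  have reach_a (v : ZDVertex (p * q)) : (zdGraph (p * q)).Reachable a v := by
    rcases v.dvd_or_dvd_val hp hq with ⟨k, hk⟩ | hqv
    · refine (pMulVertex_adj_qVertex hp hq hpq _).reachable.trans (Adj.reachable ?_)
      refine (zdGraph_adj_iff_of_mul_self_ne_zero (qVertex_mul_self_ne_zero hp hq hpq.ne) v).2 ?_
      show ((q : ℕ) : ZMod (p * q)) * v.1 = 0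
      rw [← ZMod.natCast_zmod_val v.1, hk, ← Nat.cast_mul, ZMod.natCast_eq_zero_iff]
      exact ⟨k, by ring⟩
    · exact ((pMulVertex_adj_iff hp hq hpq _ v).2 hqv).reachable
  exact fun u v => (reach_a u).symm.trans (reach_a v)

end ZeroDivisorGraph

theorem ftMetricDim_BS_zdGraph_ge_q_sub_one_general (p q : ℕ) (hp : p.Prime) (hq : q.Prime)
    (hpq : q > p) :
    ftMetricDim (BS (zdGraph (p * q))) ≥ q - 1 := by
  have := NeZero.of_pos (Nat.mul_pos hp.pos hq.pos)
  refine le_ftMetricDim ⟨_, isFTResolving_univ (BS_preconnected (zdGraph_preconnected hp hq hpq))⟩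
    fun W hW => ?_
  simpa using card_le_ncard_of_isFTResolving_BS (pMulVertex_injective hp hq hpq)
    (pMulVertex_twins hp hq hpq) (pMulVertex_adj_qVertex hp hq hpq)
    (by have := hp.two_le; simp only [Fintype.card_fin]; omega) hW

theorem ftMetricDim_BS_zdGraph_ge_q_sub_one (p q : ℕ) (hp : p.Prime) (hq : q.Prime)
    (hpodd : Odd p) (hqodd : Odd q) (hne : p ≠ q) (hpq : q > p) :
    ftMetricDim (BS (zdGraph (p * q))) ≥ q - 1 :=
  ftMetricDim_BS_zdGraph_ge_q_sub_one_general p q hp hq hpq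
end
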